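/- For every Z>0 with Z ≠ 1/12, the equation tanh(√(1−P)/(2√Z)) = P √(1−P)/(2√Z) has a smallest positive solution P₀(Z) other than P = 1; moreover P₀(Z) ∈ (0,1) when 0 < Z < 1/12, P₀(Z) ∈ (1,∞) when Z > 1/12, and as Z → ∞ one has P₀(Z) = π²Z + 1 − 8/π² + O(1/Z), in particular lim_{Z→∞} (P₀(Z) − π²Z) = 1 − 8/π². -/

import Mathlib

open MeasureTheory Filter Set

noncomputable section

/-- The open interval (-1/2, 1/2). -/
def Iv : Set ℝ := Set.Ioo (-(1/2) : ℝ) (1/2)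

/-- The closed interval [-1/2, 1/2]. -/
def Jv : Set ℝ := Set.Icc (-(1/2) : ℝ) (1/2)

/-- L² norm on (-1/2, 1/2). -/
def L2n (f : ℝ → ℝ) : ℝ := Real.sqrt (∫ x in Iv, (f x) ^ 2)

/-- H¹ norm on (-1/2, 1/2). -/
def H1n (f : ℝ → ℝ) : ℝ := Real.sqrt (∫ x in Iv, ((f x) ^ 2 + (deriv f x) ^ 2))

/-- φ = φ[u]: the solution of -Z φ'' + φ = P u on (-1/2,1/2) with periodic
boundary conditions. -/
def IsPhi (Z P : ℝ) (u φ : ℝ → ℝ) : Prop :=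
  ContDiff ℝ 2 φ ∧
  (∀ x ∈ Jv, -Z * deriv (deriv φ) x + φ x = P * u x) ∧
  φ (-(1/2)) = φ (1/2) ∧ deriv φ (-(1/2)) = deriv φ (1/2)

/-- Membership in X̃²_C : H² with Neumann boundary conditions and zero mean. -/
def MemX2t (u : ℝ → ℝ) : Prop :=
  ContDiff ℝ 2 u ∧ deriv u (-(1/2)) = 0 ∧ deriv u (1/2) = 0 ∧ (∫ x in Iv, u x) = 0

/-- The bifurcation condition tanh(√(1-P)/(2√Z)) = P √(1-P)/(2√Z), interpreted
for P > 1 via analytic continuation as tan(√(P-1)/(2√Z)) = P √(P-1)/(2√Z). -/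
def BifCond (Z P : ℝ) : Prop :=
  if P ≤ 1 then
    Real.tanh (Real.sqrt (1 - P) / (2 * Real.sqrt Z)) =
      P * Real.sqrt (1 - P) / (2 * Real.sqrt Z)
  else
    Real.tan (Real.sqrt (P - 1) / (2 * Real.sqrt Z)) =
      P * Real.sqrt (P - 1) / (2 * Real.sqrt Z)

/-!
Put `P = 1 - 4Zs²` for `P < 1` and `P = 1 + 4Zθ²` for `P > 1`; the condition becomes
`sinh s = P s cosh s`, resp. `sin θ = P θ cos θ`. Near `s = 0` the residual
`sinh s - P s cosh s` is `(4Z - 1/3) s³ + O(s⁵)`: for `Z < 1/12` it changes sign between `P = 0`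
(where it is `sinh s > 0`) and some `P < 1`, while for `Z > 1/12` it has no zero on `(0, 1)`.
Likewise, for `Z > 1/12`, `sin θ - P θ cos θ` is negative just to the right of `P = 1` and equals
`1` at `θ = π/2`, i.e. `P = 1 + π²Z`. Either way the smallest root is the least zero of a
continuous function on a compact interval. For large `Z`, with `u = π/2 - θ` the equation reads
`Pθ tan u = 1`, so `Pθu = 1 + O(u²)`; this forces `u = 2/(π³Z) + O(1/Z²)` and hence
`P = 1 + 4Z(π/2 - u)² = π²Z + 1 - 8/π² + O(1/Z)`.
-/

open Real Topology

lemma le_of_hasDerivAt_nonneg {g g' : ℝ → ℝ} {a b : ℝ} (hg : ∀ y, HasDerivAt g (g' y) y)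
    (hab : a ≤ b) (hg' : ∀ y ∈ Ioo a b, 0 ≤ g' y) : g a ≤ g b := by
  have hmono : MonotoneOn g (Icc a b) :=
    monotoneOn_of_hasDerivWithinAt_nonneg (convex_Icc a b)
      (continuous_iff_continuousAt.2 fun y => (hg y).continuousAt).continuousOn
      (fun y _ => (hg y).hasDerivWithinAt) (by simpa only [interior_Icc] using hg')
  exact hmono (left_mem_Icc.2 hab) (right_mem_Icc.2 hab) hab

lemma sinh_le_mul_cosh {x : ℝ} (hx : 0 ≤ x) : sinh x ≤ x * cosh x := by
  have := le_of_hasDerivAt_nonneg (g := fun x => x * cosh x - sinh x)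
    (g' := fun x => x * sinh x)
    (fun y => (((hasDerivAt_id' y).mul (hasDerivAt_cosh y)).sub (hasDerivAt_sinh y)).congr_deriv
      (by ring))
    hx (fun y hy => mul_nonneg hy.1.le (sinh_nonneg_iff.2 hy.1.le))
  simp only [zero_mul, sinh_zero, sub_zero] at this
  linarith

lemma mul_cosh_le_sinh {x : ℝ} (hx : 0 ≤ x) : (x - x ^ 3 / 3) * cosh x ≤ sinh x := by
  have := le_of_hasDerivAt_nonneg (g := fun x => sinh x - (x - x ^ 3 / 3) * cosh x)
    (g' := fun x => x * (x * cosh x - sinh x) + x ^ 3 / 3 * sinh x)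
    (fun y => ((hasDerivAt_sinh y).sub ((((hasDerivAt_id' y).sub
      ((hasDerivAt_pow 3 y).div_const 3)).mul (hasDerivAt_cosh y)))).congr_deriv
      (by simp only [Pi.sub_apply]; ring))
    hx (fun y ⟨hy₀, _⟩ => by
      have := sinh_le_mul_cosh hy₀.le
      exact add_nonneg (mul_nonneg hy₀.le (by linarith))
        (mul_nonneg (by positivity) (sinh_nonneg_iff.2 hy₀.le)))
  simp only [sinh_zero, cosh_zero] at this
  linarith

lemma sinh_le_mul_cosh_of_le_one {x : ℝ} (hx₀ : 0 ≤ x) (hx₁ : x ≤ 1) :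
    sinh x ≤ (x - x ^ 3 / 3 + 2 * x ^ 5 / 15) * cosh x := by
  have := le_of_hasDerivAt_nonneg
    (g := fun x => (x - x ^ 3 / 3 + 2 * x ^ 5 / 15) * cosh x - sinh x)
    (g' := fun x => (-x ^ 2 + 2 / 3 * x ^ 4) * cosh x + (x - x ^ 3 / 3 + 2 * x ^ 5 / 15) * sinh x)
    (fun y => (((((hasDerivAt_id' y).sub ((hasDerivAt_pow 3 y).div_const 3)).add
      (((hasDerivAt_pow 5 y).const_mul 2).div_const 15)).mul (hasDerivAt_cosh y)).sub
        (hasDerivAt_sinh y)).congr_deriv (by simp only [Pi.add_apply, Pi.sub_apply]; ring))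
    hx₀ (fun y ⟨hy₀, hy₁⟩ => by
      have hy : y ≤ 1 := hy₁.le.trans hx₁
      have h := mul_cosh_le_sinh hy₀.le
      have hc := cosh_pos y
      have hcoef : 0 ≤ y - y ^ 3 / 3 + 2 * y ^ 5 / 15 := by nlinarith [pow_nonneg hy₀.le 5]
      have h8 : y ^ 8 ≤ y ^ 6 := pow_le_pow_of_le_one hy₀.le hy (by norm_num)
      have hb : 0 ≤ (-y ^ 2 + 2 / 3 * y ^ 4)
          + (y - y ^ 3 / 3) * (y - y ^ 3 / 3 + 2 * y ^ 5 / 15) := by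
        nlinarith [pow_nonneg hy₀.le 6]
      nlinarith [mul_le_mul_of_nonneg_right h hcoef, mul_nonneg hc.le hb])
  simp only [sinh_zero] at this
  linarith

lemma mul_cos_le_sin {x : ℝ} (hx₀ : 0 ≤ x) (hx : x ≤ π) : x * cos x ≤ sin x := by
  have := le_of_hasDerivAt_nonneg (g := fun x => sin x - x * cos x)
    (g' := fun x => x * sin x)
    (fun y => ((hasDerivAt_sin y).sub ((hasDerivAt_id' y).mul (hasDerivAt_cos y))).congr_deriv
      (by ring))
    hx₀ fun y ⟨hy₀, hy⟩ =>
      mul_nonneg hy₀.le (sin_nonneg_of_nonneg_of_le_pi hy₀.le (hy.le.trans hx))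
  simp only [sin_zero, zero_mul, sub_zero] at this
  linarith

lemma sin_le_mul_cos {x : ℝ} (hx₀ : 0 ≤ x) (hx : x ≤ 1 / 2) :
    sin x ≤ (x + x ^ 3 / 3 + x ^ 5) * cos x := by
  have := le_of_hasDerivAt_nonneg (g := fun x => (x + x ^ 3 / 3 + x ^ 5) * cos x - sin x)
    (g' := fun x => (x ^ 2 + 5 * x ^ 4) * cos x - (x + x ^ 3 / 3 + x ^ 5) * sin x)
    (fun y => (((((hasDerivAt_id' y).add ((hasDerivAt_pow 3 y).div_const 3)).add
      (hasDerivAt_pow 5 y)).mul (hasDerivAt_cos y)).sub (hasDerivAt_sin y)).congr_deriv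
        (by simp only [Pi.add_apply]; ring))
    hx₀ (fun y ⟨hy₀, hy⟩ => by
      have hy2 : y ^ 2 ≤ 1 / 4 := by nlinarith
      have h6 : y ^ 6 ≤ y ^ 4 / 4 := by nlinarith [pow_nonneg hy₀.le 4]
      have h4 : y ^ 4 ≤ y ^ 2 / 4 := by nlinarith [sq_nonneg y]
      nlinarith [mul_le_mul_of_nonneg_left (one_sub_sq_div_two_le_cos (x := y))
          (by positivity : (0 : ℝ) ≤ y ^ 2 + 5 * y ^ 4),
        mul_le_mul_of_nonneg_left (sin_le hy₀.le)
          (by positivity : (0 : ℝ) ≤ y + y ^ 3 / 3 + y ^ 5)])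
  simp only [sin_zero] at this
  linarith

def hypArg (Z P : ℝ) : ℝ := √(1 - P) / (2 * √Z)

def trigArg (Z P : ℝ) : ℝ := √(P - 1) / (2 * √Z)

def hypResidual (Z P : ℝ) : ℝ := sinh (hypArg Z P) - P * hypArg Z P * cosh (hypArg Z P)

def trigResidual (Z P : ℝ) : ℝ := sin (trigArg Z P) - P * trigArg Z P * cos (trigArg Z P)

def bifRoots (Z : ℝ) : Set ℝ := {Q | 0 < Q ∧ Q ≠ 1 ∧ BifCond Z Q}

section Arguments

variable {Z P : ℝ}

lemma hypArg_pos (hZ : 0 < Z) (hP : P < 1) : 0 < hypArg Z P := by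
  have := sqrt_pos.2 hZ
  have := sqrt_pos.2 (sub_pos.2 hP)
  unfold hypArg; positivity

lemma trigArg_pos (hZ : 0 < Z) (hP : 1 < P) : 0 < trigArg Z P := by
  have := sqrt_pos.2 hZ
  have := sqrt_pos.2 (sub_pos.2 hP)
  unfold trigArg; positivity

lemma four_mul_hypArg_sq (hZ : 0 < Z) (hP : P ≤ 1) : 4 * Z * hypArg Z P ^ 2 = 1 - P := by
  have := sqrt_pos.2 hZ
  rw [hypArg, div_pow, mul_pow, sq_sqrt (by linarith), sq_sqrt hZ.le]
  field_simp; ring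

lemma four_mul_trigArg_sq (hZ : 0 < Z) (hP : 1 ≤ P) : 4 * Z * trigArg Z P ^ 2 = P - 1 := by
  have := sqrt_pos.2 hZ
  rw [trigArg, div_pow, mul_pow, sq_sqrt (by linarith), sq_sqrt hZ.le]
  field_simp; ring

lemma hypArg_one_sub {s : ℝ} (hZ : 0 < Z) (hs : 0 ≤ s) : hypArg Z (1 - 4 * Z * s ^ 2) = s := by
  have := sqrt_pos.2 hZ
  rw [hypArg, sub_sub_cancel, show 4 * Z * s ^ 2 = (2 * √Z * s) ^ 2 by
    rw [mul_pow, mul_pow, sq_sqrt hZ.le]; ring, sqrt_sq (by positivity)]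
  field_simp

lemma trigArg_one_add {s : ℝ} (hZ : 0 < Z) (hs : 0 ≤ s) :
    trigArg Z (1 + 4 * Z * s ^ 2) = s := by
  have := sqrt_pos.2 hZ
  rw [trigArg, add_sub_cancel_left, show 4 * Z * s ^ 2 = (2 * √Z * s) ^ 2 by
    rw [mul_pow, mul_pow, sq_sqrt hZ.le]; ring, sqrt_sq (by positivity)]
  field_simp

end Arguments

lemma bifCond_iff_hypResidual {Z P : ℝ} (hP : P ≤ 1) : BifCond Z P ↔ hypResidual Z P = 0 := by
  have hc := cosh_pos (hypArg Z P)
  rw [BifCond, if_pos hP, tanh_eq_sinh_div_cosh, ← hypArg, mul_div_assoc, ← hypArg,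
    div_eq_iff hc.ne', hypResidual, sub_eq_zero]

lemma bifCond_iff_trigResidual {Z P : ℝ} (hZ : 0 < Z) (hP : 1 < P) :
    BifCond Z P ↔ trigResidual Z P = 0 := by
  have ht := trigArg_pos hZ hP
  rw [BifCond, if_neg hP.not_ge, tan_eq_sin_div_cos, ← trigArg, mul_div_assoc, ← trigArg,
    trigResidual, sub_eq_zero]
  -- Where `cos` vanishes, `tan = sin / cos` is the junk value `0`; the right side is positive.
  by_cases hc : cos (trigArg Z P) = 0
  · have hs : sin (trigArg Z P) ≠ 0 := by
      intro hs; simpa [hs, hc] using sin_sq_add_cos_sq (trigArg Z P)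
    simp only [hc, div_zero, mul_zero]
    constructor
    · intro h; exact absurd h.symm (mul_pos (zero_lt_one.trans hP) ht).ne'
    · intro h; exact absurd h hs
  · rw [div_eq_iff hc]

lemma continuous_hypResidual (Z : ℝ) : Continuous (hypResidual Z) := by
  unfold hypResidual hypArg; fun_prop

lemma continuous_trigResidual (Z : ℝ) : Continuous (trigResidual Z) := by
  unfold trigResidual trigArg; fun_prop

lemma exists_isLeast_zero {g : ℝ → ℝ} {a b : ℝ} (hab : a ≤ b)
    (hg : ContinuousOn g (Icc a b)) (h0 : 0 ∈ uIcc (g a) (g b)) :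
    ∃ c, IsLeast {x ∈ Icc a b | g x = 0} c := by
  rw [← uIcc_of_le hab] at hg
  obtain ⟨r, hr, hgr⟩ := intermediate_value_uIcc hg h0
  rw [uIcc_of_le hab] at hr hg
  have hclosed : IsClosed {x ∈ Icc a b | g x = 0} :=
    hg.preimage_isClosed_of_isClosed isClosed_Icc isClosed_singleton
  exact ⟨_, hclosed.isLeast_csInf ⟨r, hr, hgr⟩ ⟨a, fun x hx => hx.1.1⟩⟩

section Residuals

variable {Z P : ℝ}

lemma hypResidual_zero_pos (hZ : 0 < Z) : 0 < hypResidual Z 0 := by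
  simpa [hypResidual] using hypArg_pos hZ zero_lt_one

lemma hypResidual_pos (h12 : 1 / 12 < Z) (hP : P < 1) : 0 < hypResidual Z P := by
  have hZ : 0 < Z := by linarith
  have hs : 0 < hypArg Z P := hypArg_pos hZ hP
  have hP' : P = 1 - 4 * Z * hypArg Z P ^ 2 := by linarith [four_mul_hypArg_sq hZ hP.le]
  rw [hypResidual]
  generalize hypArg Z P = s at hs hP' ⊢
  subst hP'
  have key : 0 < s ^ 3 * (4 * Z - 1 / 3) * cosh s := by
    have := cosh_pos s
    have : 0 < 4 * Z - 1 / 3 := by linarith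
    positivity
  linarith [mul_cosh_le_sinh hs.le]

lemma exists_hypResidual_neg (hZ : 0 < Z) (h12 : Z < 1 / 12) :
    ∃ P, 0 < P ∧ P < 1 ∧ hypResidual Z P < 0 := by
  set s := √(1 / 3 - 4 * Z)
  have hs : 0 < s := sqrt_pos.2 (by linarith)
  have hs2 : s ^ 2 = 1 / 3 - 4 * Z := sq_sqrt (by linarith)
  refine ⟨1 - 4 * Z * s ^ 2, by nlinarith, by nlinarith, ?_⟩
  have key : 0 < s ^ 5 * (13 / 15) * cosh s := by have := cosh_pos s; positivity
  rw [hypResidual, hypArg_one_sub hZ hs.le]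
  nlinarith [sinh_le_mul_cosh_of_le_one hs.le (by nlinarith)]

lemma trigResidual_neg (hP₁ : 1 < P) (hPZ : P ≤ 1 + Z) (hP : P < 1 + 4 * Z * (4 * Z - 1 / 3)) :
    trigResidual Z P < 0 := by
  have hZ : 0 < Z := by linarith
  have hθ : 0 < trigArg Z P := trigArg_pos hZ hP₁
  have hθ2 : 4 * Z * trigArg Z P ^ 2 = P - 1 := four_mul_trigArg_sq hZ hP₁.le
  rw [trigResidual]
  generalize trigArg Z P = θ at hθ hθ2 ⊢
  have hθ_half : θ ≤ 1 / 2 := by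
    have : θ ^ 2 ≤ 1 / 4 := le_of_mul_le_mul_left (by linarith) (by positivity : 0 < 4 * Z)
    nlinarith
  have hθ_sq : θ ^ 2 < 4 * Z - 1 / 3 :=
    lt_of_mul_lt_mul_left (by linarith) (by positivity : 0 ≤ 4 * Z)
  have key : 0 < θ ^ 3 * (4 * Z - 1 / 3 - θ ^ 2) * cos θ := by
    have := cos_pos_of_mem_Ioo (x := θ) ⟨by linarith [pi_gt_three], by linarith [pi_gt_three]⟩
    have : 0 < 4 * Z - 1 / 3 - θ ^ 2 := by linarith
    positivity
  rw [show P = 1 + 4 * Z * θ ^ 2 by linarith]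
  nlinarith [sin_le_mul_cos hθ.le hθ_half]

lemma trigResidual_one_add_pi_sq_mul (hZ : 0 < Z) : trigResidual Z (1 + π ^ 2 * Z) = 1 := by
  rw [show 1 + π ^ 2 * Z = 1 + 4 * Z * (π / 2) ^ 2 by ring, trigResidual,
    trigArg_one_add hZ (by positivity), sin_pi_div_two, cos_pi_div_two]
  ring

end Residuals

section LeastRoot

variable {Z : ℝ}

lemma exists_isLeast_bifRoots_of_lt (hZ : 0 < Z) (h12 : Z < 1 / 12) :
    ∃ p, IsLeast (bifRoots Z) p ∧ p < 1 := by
  obtain ⟨P₁, hP₁, hP₁_lt, hneg⟩ := exists_hypResidual_neg hZ h12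
  have hpos := hypResidual_zero_pos hZ
  obtain ⟨p, ⟨⟨hp₀, hpP₁⟩, hp⟩, hleast⟩ := exists_isLeast_zero hP₁.le
    (continuous_hypResidual Z).continuousOn (mem_uIcc.2 (Or.inr ⟨hneg.le, hpos.le⟩))
  have hp_pos : 0 < p := hp₀.lt_of_ne (by rintro rfl; exact hpos.ne' hp)
  refine ⟨p, ⟨⟨hp_pos, by linarith, (bifCond_iff_hypResidual (by linarith)).2 hp⟩,
    fun Q ⟨hQ₀, _, hQ⟩ => ?_⟩, by linarith⟩
  rcases le_or_gt Q P₁ with hQ₁ | hQ₁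
  · exact hleast ⟨⟨hQ₀.le, hQ₁⟩, (bifCond_iff_hypResidual (by linarith)).1 hQ⟩
  · linarith

lemma exists_isLeast_bifRoots_of_gt (h12 : 1 / 12 < Z) :
    ∃ p, IsLeast (bifRoots Z) p ∧ 1 < p ∧ p < 1 + π ^ 2 * Z := by
  have hZ : 0 < Z := by linarith
  set a := 1 + min Z (2 * Z * (4 * Z - 1 / 3))
  have ha₁ : 1 < a := lt_add_of_pos_right 1 (lt_min hZ (by nlinarith))
  have haZ : a ≤ 1 + Z := by simp only [a]; linarith [min_le_left Z (2 * Z * (4 * Z - 1 / 3))]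
  have ha_neg (Q : ℝ) (hQ₁ : 1 < Q) (hQ : Q ≤ a) : trigResidual Z Q < 0 := by
    refine trigResidual_neg hQ₁ (hQ.trans haZ) (hQ.trans_lt ?_)
    have := min_le_right Z (2 * Z * (4 * Z - 1 / 3))
    simp only [a]; nlinarith
  have hab : a ≤ 1 + π ^ 2 * Z := by
    have : 1 ≤ π ^ 2 := by nlinarith [pi_gt_three]
    nlinarith [mul_le_mul_of_nonneg_right this hZ.le]
  have htop := trigResidual_one_add_pi_sq_mul hZ
  obtain ⟨p, ⟨⟨hap, hpb⟩, hp⟩, hleast⟩ := exists_isLeast_zero hab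
    (continuous_trigResidual Z).continuousOn
    (mem_uIcc.2 (Or.inl ⟨(ha_neg a ha₁ le_rfl).le, by rw [htop]; exact zero_le_one⟩))
  have hp_lt : p < 1 + π ^ 2 * Z := hpb.lt_of_ne (by rintro rfl; simp [htop] at hp)
  refine ⟨p, ⟨⟨by linarith, by linarith, (bifCond_iff_trigResidual hZ (by linarith)).2 hp⟩,
    fun Q ⟨hQ₀, hQ₁, hQ⟩ => ?_⟩, by linarith, hp_lt⟩
  rcases hQ₁.lt_or_gt with hQ₁ | hQ₁
  · exact absurd ((bifCond_iff_hypResidual hQ₁.le).1 hQ) (hypResidual_pos h12 hQ₁).ne'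
  have hQ := (bifCond_iff_trigResidual hZ hQ₁).1 hQ
  rcases le_or_gt Q a with hQa | hQa
  · exact absurd hQ (ha_neg Q hQ₁ hQa).ne
  rcases le_or_gt Q (1 + π ^ 2 * Z) with hQb | hQb
  · exact hleast ⟨⟨hQa.le, hQb⟩, hQ⟩
  · linarith

end LeastRoot

lemma mul_bounds_of_mul_sin_eq_cos {c u : ℝ} (hc : 2 ≤ c) (hu : 0 < u) (hu' : u < π)
    (h : c * sin u = cos u) : 1 - u ^ 2 ≤ c * u ∧ c * u ≤ 1 := by
  have hsin : 0 < sin u := sin_pos_of_pos_of_lt_pi hu hu'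
  have hcos : 0 < cos u := h ▸ by positivity
  have hupper : c * u ≤ 1 := by
    refine le_of_mul_le_mul_right ?_ hcos
    calc c * u * cos u = c * (u * cos u) := by ring
      _ ≤ c * sin u := mul_le_mul_of_nonneg_left (mul_cos_le_sin hu.le hu'.le) (by linarith)
      _ = 1 * cos u := by rw [h, one_mul]
  have hu_half : u ≤ 1 / 2 := by nlinarith
  have hlower : 1 ≤ c * (u + u ^ 3 / 3 + u ^ 5) := by
    refine le_of_mul_le_mul_right ?_ hsin
    calc 1 * sin u ≤ (u + u ^ 3 / 3 + u ^ 5) * cos u := by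
          rw [one_mul]; exact sin_le_mul_cos hu.le hu_half
      _ = c * (u + u ^ 3 / 3 + u ^ 5) * sin u := by rw [← h]; ring
  refine ⟨?_, hupper⟩
  have hu4 : u ^ 4 ≤ u ^ 2 / 4 := by
    nlinarith [mul_le_mul_of_nonneg_left (by nlinarith : u ^ 2 ≤ 1 / 4) (sq_nonneg u)]
  have hcu : 0 ≤ c * u := by positivity
  nlinarith [mul_le_mul_of_nonneg_left hupper (by positivity : 0 ≤ u ^ 2 / 3 + u ^ 4)]

lemma mul_pi_cube_sub_one_mem_Icc {Z u P : ℝ} (hZ : 1 ≤ Z) (hu : 0 < u) (hu' : u ≤ 1 / 2)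
    (hP : P = 1 + 4 * Z * (π / 2 - u) ^ 2)
    (h : 1 - u ^ 2 ≤ P * (π / 2 - u) * u ∧ P * (π / 2 - u) * u ≤ 1) :
    Z * (π ^ 3 * Z * u / 2 - 1) ∈ Icc (-1) 2 := by
  have pl : 3.14 < π := pi_gt_d2
  have ph : π < 3.15 := pi_lt_d2
  have hZ₀ : 0 < Z := by linarith
  set θ := π / 2 - u with hθ
  have hθ₁ : 1 ≤ θ := by linarith
  have hθ₂ : θ ≤ 1.575 := by linarith
  set w := Z * u
  have hw : w ≤ 1 / 4 := by
    have : P * θ * u = θ * u + 4 * w * θ ^ 3 := by rw [hP]; ring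
    nlinarith [mul_le_mul_of_nonneg_left (one_le_pow₀ hθ₁ : 1 ≤ θ ^ 3)
      (by positivity : 0 ≤ 4 * w), mul_nonneg (by linarith : (0 : ℝ) ≤ θ) hu.le]
  have hw₀ : 0 ≤ w := by positivity
  have hw2 : w ^ 2 ≤ 1 / 16 := by nlinarith
  have hu4 : u ≤ 1 / 4 := by nlinarith
  have hE : Z * (π ^ 3 * Z * u / 2 - 1) = Z * (P * θ * u - 1) - θ * w + 3 * π ^ 2 * w ^ 2
      - 6 * π * w ^ 2 * u + 4 * w ^ 2 * u ^ 2 := by rw [hP, hθ]; ring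
  have hX_upper : Z * (P * θ * u - 1) ≤ 0 :=
    mul_nonpos_of_nonneg_of_nonpos hZ₀.le (by linarith)
  have hX_lower : -(w * u) ≤ Z * (P * θ * u - 1) := by
    nlinarith [mul_le_mul_of_nonneg_left h.1 hZ₀.le]
  have hθw : θ * w ≤ 1.575 / 4 := by nlinarith
  have hπ2 : π ^ 2 ≤ 9.93 := by nlinarith
  have hπw : π ^ 2 * w ^ 2 ≤ 9.93 * (1 / 16) :=
    mul_le_mul hπ2 hw2 (by positivity) (by norm_num)
  have hπwu : π * w ^ 2 * u ≤ 3.15 * (1 / 16) * (1 / 4) :=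
    mul_le_mul (mul_le_mul ph.le hw2 (by positivity) (by norm_num)) hu4 hu.le (by norm_num)
  have hwu : w ^ 2 * u ^ 2 ≤ 1 / 256 := by nlinarith
  have hθw₀ : 0 ≤ θ * w := by positivity
  have hπwu₀ : 0 ≤ π * w ^ 2 * u := by positivity
  have hwu₁ : w * u ≤ 1 / 16 := by nlinarith
  rw [hE]
  constructor
  · linarith [sq_nonneg (w * u), sq_nonneg (π * w)]
  · linarith

-- `P - (π²Z + 1 - 8/π²) = 4Zu² - (8/π²)(π³Zu/2 - 1)`.
lemma abs_sub_asymptote_le {Z u P : ℝ} (hZ : 1 ≤ Z) (hu : 0 ≤ u)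
    (hP : P = 1 + 4 * Z * (π / 2 - u) ^ 2) (hE : Z * (π ^ 3 * Z * u / 2 - 1) ∈ Icc (-1) 2) :
    |P - (π ^ 2 * Z + 1 - 8 / π ^ 2)| ≤ 2 / Z := by
  have hZ₀ : 0 < Z := by linarith
  have hπ : 3.14 < π := pi_gt_d2
  set E := Z * (π ^ 3 * Z * u / 2 - 1)
  have hw₀ : 0 ≤ Z * u := by positivity
  have hw : Z * u ≤ 1 / 5 := by
    have : Z * (π ^ 3 * (Z * u) / 2 - 3) ≤ 0 := by
      simp only [E] at hE; nlinarith [hE.2]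
    nlinarith [nonpos_of_mul_nonpos_right this hZ₀, pow_le_pow_left₀ (by norm_num) hπ.le 3]
  have hq : 8 / π ^ 2 < 0.82 := by rw [div_lt_iff₀ (by positivity)]; nlinarith
  have hq₀ : 0 < 8 / π ^ 2 := by positivity
  have hZD : Z * (P - (π ^ 2 * Z + 1 - 8 / π ^ 2)) = -(8 / π ^ 2) * E + 4 * (Z * u) ^ 2 := by
    rw [hP]; field_simp; ring
  have hbound : |Z * (P - (π ^ 2 * Z + 1 - 8 / π ^ 2))| ≤ 2 := by
    rw [hZD, abs_le]
    constructor <;> nlinarith [mul_le_mul_of_nonneg_left hE.1 hq₀.le,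
      mul_le_mul_of_nonneg_left hE.2 hq₀.le]
  rw [abs_mul, abs_of_pos hZ₀] at hbound
  rw [le_div_iff₀ hZ₀, mul_comm]
  exact hbound

lemma abs_sInf_bifRoots_sub_le {Z : ℝ} (hZ : 3 ≤ Z) :
    |sInf (bifRoots Z) - (π ^ 2 * Z + 1 - 8 / π ^ 2)| ≤ 2 / Z := by
  have hZ₀ : 0 < Z := by linarith
  obtain ⟨p, hp, hp₁, hp_lt⟩ := exists_isLeast_bifRoots_of_gt (by linarith : 1 / 12 < Z)
  rw [hp.csInf_eq]
  have hres : trigResidual Z p = 0 := (bifCond_iff_trigResidual hZ₀ hp₁).1 hp.1.2.2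
  have hpZ : 1 + Z < p := by
    by_contra! h
    exact (trigResidual_neg hp₁ h (by nlinarith)).ne hres
  have hθ₀ : 0 < trigArg Z p := trigArg_pos hZ₀ hp₁
  have hθ2 : 4 * Z * trigArg Z p ^ 2 = p - 1 := four_mul_trigArg_sq hZ₀ hp₁.le
  rw [trigResidual] at hres
  generalize trigArg Z p = θ at hθ₀ hθ2 hres
  obtain ⟨u, rfl⟩ : ∃ u, θ = π / 2 - u := ⟨π / 2 - θ, by ring⟩
  have hθ_half : 1 / 2 < π / 2 - u := by
    have : 1 / 4 < (π / 2 - u) ^ 2 :=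
      lt_of_mul_lt_mul_left (by linarith) (by positivity : 0 ≤ 4 * Z)
    nlinarith
  have hu : 0 < u := by
    have : (π / 2 - u) ^ 2 < (π / 2) ^ 2 :=
      lt_of_mul_lt_mul_left (by linarith) (by positivity : 0 ≤ 4 * Z)
    have := (pow_lt_pow_iff_left₀ hθ₀.le (by positivity) two_ne_zero).1 this
    linarith
  have hc : 2 ≤ p * (π / 2 - u) := by nlinarith
  rw [sin_pi_div_two_sub, cos_pi_div_two_sub, sub_eq_zero, eq_comm] at hres
  have hbounds := mul_bounds_of_mul_sin_eq_cos hc hu (by linarith [pi_pos]) hres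
  have hP : p = 1 + 4 * Z * (π / 2 - u) ^ 2 := by linarith
  exact abs_sub_asymptote_le (by linarith) hu.le hP
    (mul_pi_cube_sub_one_mem_Icc (by linarith) hu (by nlinarith) hP hbounds)

lemma tendsto_of_abs_sub_le_div {f : ℝ → ℝ} {l C Z₁ : ℝ}
    (h : ∀ Z, Z₁ ≤ Z → |f Z - l| ≤ C / Z) :
    Tendsto f atTop (𝓝 l) := by
  rw [tendsto_iff_norm_sub_tendsto_zero]
  exact squeeze_zero' (Eventually.of_forall fun _ => norm_nonneg _)
    ((eventually_ge_atTop Z₁).mono h) (tendsto_const_nhds.div_atTop tendsto_id)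

/-- existence of the smallest positive solution P₀(Z) ≠ 1 of the
bifurcation condition, its location relative to 1, and its large-Z asymptotics
P₀(Z) = π²Z + 1 - 8/π² + O(1/Z). -/
theorem P0_exists_and_asymptotics :
    ∃ P0 : ℝ → ℝ,
      (∀ Z : ℝ, 0 < Z → Z ≠ 1/12 →
        0 < P0 Z ∧ P0 Z ≠ 1 ∧ BifCond Z (P0 Z) ∧
        (∀ Q : ℝ, 0 < Q → Q ≠ 1 → BifCond Z Q → P0 Z ≤ Q) ∧
        (Z < 1/12 → P0 Z ∈ Set.Ioo (0 : ℝ) 1) ∧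
        (1/12 < Z → 1 < P0 Z)) ∧
      (∃ C > 0, ∃ Z₁ > 0, ∀ Z : ℝ, Z₁ ≤ Z →
        |P0 Z - (Real.pi ^ 2 * Z + 1 - 8 / Real.pi ^ 2)| ≤ C / Z) ∧
      Tendsto (fun Z => P0 Z - Real.pi ^ 2 * Z) atTop
        (nhds (1 - 8 / Real.pi ^ 2)) := by
  refine ⟨fun Z => sInf (bifRoots Z), fun Z hZ hZ12 => ?_,
    ⟨2, two_pos, 3, three_pos, fun Z hZ => abs_sInf_bifRoots_sub_le hZ⟩,
    tendsto_of_abs_sub_le_div (C := 2) (Z₁ := 3) fun Z hZ => ?_⟩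
  · obtain ⟨p, hp, hsmall, hbig⟩ :
        ∃ p, IsLeast (bifRoots Z) p ∧ (Z < 1 / 12 → p < 1) ∧ (1 / 12 < Z → 1 < p) := by
      rcases hZ12.lt_or_gt with h12 | h12
      · obtain ⟨p, hp, hp₁⟩ := exists_isLeast_bifRoots_of_lt hZ h12
        exact ⟨p, hp, fun _ => hp₁, fun h => (lt_asymm h12 h).elim⟩
      · obtain ⟨p, hp, hp₁, -⟩ := exists_isLeast_bifRoots_of_gt h12
        exact ⟨p, hp, fun h => (lt_asymm h12 h).elim, fun _ => hp₁⟩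
    beta_reduce
    rw [hp.csInf_eq]
    exact ⟨hp.1.1, hp.1.2.1, hp.1.2.2, fun Q h₀ h₁ hQ => hp.2 ⟨h₀, h₁, hQ⟩,
      fun h => ⟨hp.1.1, hsmall h⟩, hbig⟩
  · beta_reduce
    rw [sub_sub, ← add_sub_assoc]
    exact abs_sInf_bifRoots_sub_le hZ
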